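/- arXiv:2005.13719 — 2 statements merged into one kernel-verified Lean document; each statement's English description precedes it below -/
import Mathlib

section
/- Suppose that no minimizer of L over W₁ belongs to W_conv. Then every minimizer ω̂ of L over W_conv (which exists since W_conv is compact and L is continuous) has at least one zero entry, i.e., there exists i ∈ {2,…,N} with ω̂ᵢ = 0. (Theorem 1: the convex hull restriction of the synthetic control method yields a sparse weight vector.) -/
/-!
If every entry of a minimizer `ω̂` over `W_conv` were positive, `W_conv` would be a neighbourhood
of `ω̂` inside the affine plane `W₁`, so `ω̂` would be a local minimizer of `L` on `W₁`. Since `V` is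
positive semidefinite, `L` is convex, and a local minimizer of a convex function on a convex set is
a global one: `ω̂` would be a minimizer over `W₁` lying in `W_conv`.
-/

open Matrix Finset

lemma Matrix.IsSymm.convex_combination_dotProduct_mulVec {n R : Type*} [Fintype n] [CommRing R]
    {V : Matrix n n R} (hV : V.IsSymm) (x y : n → R) {a b : R} (hab : a + b = 1) :
    a * (x ⬝ᵥ V *ᵥ x) + b * (y ⬝ᵥ V *ᵥ y) - (a • x + b • y) ⬝ᵥ V *ᵥ (a • x + b • y) =
      a * b * ((x - y) ⬝ᵥ V *ᵥ (x - y)) := by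
  have hsymm : y ⬝ᵥ V *ᵥ x = x ⬝ᵥ V *ᵥ y := by
    rw [dotProduct_mulVec, ← mulVec_transpose, hV.eq, dotProduct_comm]
  obtain rfl : b = 1 - a := eq_sub_of_add_eq' hab
  simp only [add_dotProduct, dotProduct_add, sub_dotProduct, dotProduct_sub, mulVec_add,
    mulVec_sub, mulVec_smul, smul_dotProduct, dotProduct_smul, smul_eq_mul, hsymm]
  ring

namespace Matrix.PosSemidef

variable {n : Type*} [Fintype n] {V : Matrix n n ℝ}

lemma convexOn_dotProduct_mulVec (hV : V.PosSemidef) :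
    ConvexOn ℝ Set.univ fun x : n → ℝ => x ⬝ᵥ V *ᵥ x := by
  refine ⟨convex_univ, fun x _ y _ a b ha hb hab => ?_⟩
  have hdefect := (isHermitian_iff_isSymm.mp hV.isHermitian).convex_combination_dotProduct_mulVec
    x y hab
  have hnonneg : 0 ≤ (x - y) ⬝ᵥ V *ᵥ (x - y) := by
    simpa using hV.dotProduct_mulVec_nonneg (x - y)
  simp only [smul_eq_mul]
  linarith [mul_nonneg (mul_nonneg ha hb) hnonneg]

lemma convexOn_residual {ι : Type*} [Fintype ι] (hV : V.PosSemidef) (y : n → ℝ) (X : ι → n → ℝ) :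
    ConvexOn ℝ Set.univ fun ω : ι → ℝ => (y - ∑ i, ω i • X i) ⬝ᵥ V *ᵥ (y - ∑ i, ω i • X i) := by
  let residual : (ι → ℝ) →ᵃ[ℝ] n → ℝ :=
    AffineMap.const ℝ _ y - (Fintype.linearCombination ℝ X).toAffineMap
  simpa [residual, Function.comp_def, Fintype.linearCombination_apply] using
    hV.convexOn_dotProduct_mulVec.comp_affineMap residual

end Matrix.PosSemidef

theorem convex_hull_restriction_sparsity_general
    (d N : ℕ)
    (X₁ : Fin d → ℝ) (X : Fin (N - 1) → Fin d → ℝ)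
    (V : Matrix (Fin d) (Fin d) ℝ) (hV : V.PosDef)
    (L : (Fin (N - 1) → ℝ) → ℝ)
    (hL : ∀ ω, L ω =
      (X₁ - ∑ i, ω i • X i) ⬝ᵥ V.mulVec (X₁ - ∑ i, ω i • X i))
    (W₁ Wconv : Set (Fin (N - 1) → ℝ))
    (hW₁ : W₁ = {ω | ∑ i, ω i = 1})
    (hWconv : Wconv = {ω | (∀ i, 0 ≤ ω i) ∧ ∑ i, ω i = 1})
    (hno : ∀ ω ∈ W₁, (∀ η ∈ W₁, L ω ≤ L η) → ω ∉ Wconv)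
    (ωhat : Fin (N - 1) → ℝ)
    (hmem : ωhat ∈ Wconv) (hmin : ∀ η ∈ Wconv, L ωhat ≤ L η) :
    ∃ i, ωhat i = 0 := by
  subst hW₁ hWconv
  by_contra! hne
  obtain ⟨hnonneg, hsum⟩ := hmem
  have hpos : ∀ i, 0 < ωhat i := fun i => (hnonneg i).lt_of_ne' (hne i)
  have hconvex : ConvexOn ℝ {ω | ∑ i, ω i = 1} L := by
    rw [show L = _ from funext hL]
    exact (hV.posSemidef.convexOn_residual X₁ X).subset (Set.subset_univ _)
      (convex_hyperplane ⟨fun _ _ => sum_add_distrib, fun _ _ => (mul_sum ..).symm⟩ 1)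
  have hlocal : IsLocalMinOn L {ω | ∑ i, ω i = 1} ωhat := by
    have horthant : Set.univ.pi (fun _ => Set.Ioi 0) ∈ nhds ωhat :=
      set_pi_mem_nhds Set.finite_univ fun i _ => Ioi_mem_nhds (hpos i)
    refine Filter.mem_of_superset (inter_mem_nhdsWithin _ horthant) ?_
    rintro η ⟨hη, hηpos⟩
    exact hmin η ⟨fun i => (hηpos i (Set.mem_univ i)).le, hη⟩
  have hglobal : IsMinOn L {ω | ∑ i, ω i = 1} ωhat :=
    .of_isLocalMinOn_of_convexOn hsum hlocal hconvex
  exact hno ωhat hsum (fun η hη => hglobal hη) ⟨hnonneg, hsum⟩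

/-- **Theorem 1** (sparsity of the convex-hull-constrained synthetic control weights).
Indices `i : Fin (N-1)` represent the donor units `2, …, N`; `X i` is the predictor
vector of donor `i` and `X₁` that of the treated unit.  If no minimizer of the loss
`L` over the affine set `W₁ = {ω : ∑ ωᵢ = 1}` lies in the convex hull constraint set
`W_conv = {ω : ωᵢ ≥ 0, ∑ ωᵢ = 1}`, then every minimizer of `L` over `W_conv`
has at least one zero entry. -/
theorem convex_hull_restriction_sparsity
    (d N : ℕ) (hd : 1 ≤ d) (hN : 3 ≤ N)
    (X₁ : Fin d → ℝ) (X : Fin (N - 1) → Fin d → ℝ)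
    (V : Matrix (Fin d) (Fin d) ℝ) (hV : V.PosDef)
    (L : (Fin (N - 1) → ℝ) → ℝ)
    (hL : ∀ ω, L ω =
      (X₁ - ∑ i, ω i • X i) ⬝ᵥ V.mulVec (X₁ - ∑ i, ω i • X i))
    (W₁ Wconv : Set (Fin (N - 1) → ℝ))
    (hW₁ : W₁ = {ω | ∑ i, ω i = 1})
    (hWconv : Wconv = {ω | (∀ i, 0 ≤ ω i) ∧ ∑ i, ω i = 1})
    (hno : ∀ ω ∈ W₁, (∀ η ∈ W₁, L ω ≤ L η) → ω ∉ Wconv)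
    (ωhat : Fin (N - 1) → ℝ)
    (hmem : ωhat ∈ Wconv) (hmin : ∀ η ∈ Wconv, L ωhat ≤ L η) :
    ∃ i, ωhat i = 0 :=
  convex_hull_restriction_sparsity_general d N X₁ X V hV L hL W₁ Wconv hW₁ hWconv hno ωhat hmem hmin
end

section
/- Suppose that no minimizer of L over W₂ belongs to W_ps-conv. Then every minimizer ω̂ of L over W_ps-conv has at least one zero entry among its last N−1 coordinates, i.e., there exists i ∈ {2,…,N} with ω̂ᵢ = 0. (Theorem 2: the parallelly shiftable convex hull restriction still yields a sparse weight vector.) -/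
/-!
If every donor weight of `ω̂` were positive, `W_ps-conv` would be a neighbourhood of `ω̂`
inside the affine hyperplane `W₂`, so `ω̂` would be a local minimizer of `L` on `W₂`.
Since `V ⪰ 0`, `L` is convex, so that local minimizer is a global one on `W₂`; it lies in
`W_ps-conv`, which the hypothesis rules out.
-/

open Matrix Finset Filter Topology

lemma Matrix.PosSemidef.convexOn_dotProduct_mulVec_s1 {n : Type*} [Fintype n]
    {V : Matrix n n ℝ} (hV : V.PosSemidef) : ConvexOn ℝ Set.univ fun x => x ⬝ᵥ V *ᵥ x := by
  have hVt : Vᵀ = V := by simpa using hV.isHermitian.eq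
  have hsymm (u v : n → ℝ) : v ⬝ᵥ V *ᵥ u = u ⬝ᵥ V *ᵥ v := by
    rw [dotProduct_mulVec, ← mulVec_transpose, hVt, dotProduct_comm]
  refine ⟨convex_univ, fun x _ y _ a b ha hb hab => ?_⟩
  have hdefect : a • (x ⬝ᵥ V *ᵥ x) + b • (y ⬝ᵥ V *ᵥ y) - (a • x + b • y) ⬝ᵥ V *ᵥ (a • x + b • y)
      = a * b * ((x - y) ⬝ᵥ V *ᵥ (x - y)) := by
    obtain rfl : b = 1 - a := by linarith
    simp only [add_dotProduct, dotProduct_add, sub_dotProduct, dotProduct_sub, mulVec_add,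
      mulVec_sub, mulVec_smul, smul_dotProduct, dotProduct_smul, smul_eq_mul, hsymm x y]
    ring
  have hnonneg : 0 ≤ (x - y) ⬝ᵥ V *ᵥ (x - y) := by
    simpa using hV.dotProduct_mulVec_nonneg (x - y)
  nlinarith [mul_nonneg (mul_nonneg ha hb) hnonneg]

lemma Matrix.PosSemidef.convexOn_dotProduct_mulVec_sub_mulVec {m n : Type*} [Fintype m]
    [Fintype n] {V : Matrix m m ℝ} (hV : V.PosSemidef) (y : m → ℝ) (X : Matrix m n ℝ) :
    ConvexOn ℝ Set.univ fun ω => (y - X *ᵥ ω) ⬝ᵥ V *ᵥ (y - X *ᵥ ω) :=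
  hV.convexOn_dotProduct_mulVec_s1.comp_affineMap
    (AffineMap.const ℝ (n → ℝ) y - X.mulVecLin.toAffineMap)

lemma setOf_forall_ne_nonneg_mem_nhds {ι : Type*} [Finite ι] {j : ι} {a : ι → ℝ}
    (ha : ∀ i ≠ j, 0 < a i) : {ω : ι → ℝ | ∀ i ≠ j, 0 ≤ ω i} ∈ 𝓝 a := by
  refine eventually_all.2 fun i => ?_
  by_cases hij : i = j
  · exact .of_forall fun _ h => absurd hij h
  · filter_upwards [(continuous_apply i).continuousAt.eventually (lt_mem_nhds (ha i hij))]
      with ω hω _ using hω.le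

/-- `ω 0` is the intercept `ω₁`; the `ω i` with `i ≠ 0` are the donor weights `ω₂, …, ω_N`. -/
theorem ps_convex_hull_restriction_sparsity
    (d N : ℕ) (hN : 3 ≤ N)
    (X₁ : Fin d → ℝ) (X₀ : Matrix (Fin d) (Fin N) ℝ)
    (V : Matrix (Fin d) (Fin d) ℝ) (hV : V.PosDef)
    (L : (Fin N → ℝ) → ℝ)
    (hL : ∀ ω, L ω = (X₁ - X₀.mulVec ω) ⬝ᵥ V.mulVec (X₁ - X₀.mulVec ω))
    (W₂ Wps : Set (Fin N → ℝ))
    (hW₂ : W₂ = {ω | ∑ i ∈ Finset.univ.erase ⟨0, by omega⟩, ω i = 1})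
    (hWps : Wps = {ω | (∀ i, i ≠ ⟨0, by omega⟩ → 0 ≤ ω i) ∧ ∑ i ∈ Finset.univ.erase ⟨0, by omega⟩, ω i = 1})
    (hno : ∀ ω ∈ W₂, (∀ η ∈ W₂, L ω ≤ L η) → ω ∉ Wps)
    (ωhat : Fin N → ℝ)
    (hmem : ωhat ∈ Wps) (hmin : ∀ η ∈ Wps, L ωhat ≤ L η) :
    ∃ i, i ≠ ⟨0, by omega⟩ ∧ ωhat i = 0 := by
  by_contra! hne
  rw [hWps] at hno hmem hmin
  obtain ⟨hnonneg, hsum⟩ := hmem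
  have hmem₂ : ωhat ∈ W₂ := hW₂ ▸ hsum
  have hconv : ConvexOn ℝ W₂ L := by
    rw [hW₂, show L = _ from funext hL]
    exact (hV.posSemidef.convexOn_dotProduct_mulVec_sub_mulVec X₁ X₀).subset (Set.subset_univ _)
      (convex_hyperplane ⟨fun _ _ => sum_add_distrib, fun _ _ => (mul_sum ..).symm⟩ 1)
  have hlocal : IsLocalMinOn L W₂ ωhat := by
    refine mem_of_superset (inter_mem_nhdsWithin W₂ (setOf_forall_ne_nonneg_mem_nhds
      fun i hi => (hnonneg i hi).lt_of_ne' (hne i hi))) ?_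
    rintro η ⟨hη₂, hη⟩
    exact hmin η ⟨hη, by rwa [hW₂] at hη₂⟩
  exact hno ωhat hmem₂ (IsMinOn.of_isLocalMinOn_of_convexOn hmem₂ hlocal hconv) ⟨hnonneg, hsum⟩
end
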